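/- arXiv:1510.07131 — 3 statements merged into one kernel-verified Lean document; each statement's English description precedes it below -/
import Mathlib

section
/- A preorder P is Kan injective (left Kan injective) with respect to all full order-embeddings into preorders if and only if P is a complete lattice (up to equivalence of preorders); in particular, a poset is injective with respect to poset embeddings, with left Kan extensions existing along each embedding, if and only if it is a complete lattice. -/
/-!
Along a full embedding `j`, the pointwise formula `(Lan_j f) y = sup {f x | j x ≤ y}` is a left
Kan extension whenever these suprema exist, so completeness gives Kan injectivity. Conversely,
extending the inclusion `D → P` along `D ↪ WithTop D` and evaluating at `⊤` yields a supremum of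
`D`; once all suprema exist, infima are suprema of sets of lower bounds.
-/

namespace Preorder

variable {X Y P : Type*} [Preorder X] [Preorder Y] [Preorder P]

def IsLeftKanExtension (j : X → Y) (f : X → P) (g : Y → P) : Prop :=
  Monotone g ∧ (∀ x, g (j x) ≤ f x ∧ f x ≤ g (j x)) ∧
    ∀ h : Y → P, Monotone h → (∀ x, f x ≤ h (j x)) → ∀ y, g y ≤ h y

theorem isLeftKanExtension_of_isLUB {j : X → Y} {f : X → P} {g : Y → P} (hf : Monotone f)
    (hj : ∀ x x', j x ≤ j x' → x ≤ x') (hg : ∀ y, IsLUB (f '' {x | j x ≤ y}) (g y)) :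
    IsLeftKanExtension j f g := by
  refine ⟨fun y y' hy ↦ ?_, fun x ↦ ⟨?_, ?_⟩, fun h hh hfh y ↦ ?_⟩
  · exact (hg y).2 <| Set.forall_mem_image.2 fun x hx ↦ (hg y').1 ⟨x, le_trans hx hy, rfl⟩
  · exact (hg (j x)).2 <| Set.forall_mem_image.2 fun x' hx' ↦ hf (hj _ _ hx')
  · exact (hg (j x)).1 ⟨x, le_rfl, rfl⟩
  · exact (hg y).2 <| Set.forall_mem_image.2 fun x hx ↦ (hfh x).trans (hh hx)

theorem IsLeftKanExtension.isLUB_top {D : Set P} {g : WithTop D → P}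
    (hg : IsLeftKanExtension WithTop.some Subtype.val g) : IsLUB D (g ⊤) := by
  obtain ⟨hmono, hcomp, hleast⟩ := hg
  refine ⟨fun d hd ↦ ?_, fun b hb ↦ ?_⟩
  · exact (hcomp ⟨d, hd⟩).2.trans (hmono le_top)
  · exact hleast (fun _ ↦ b) monotone_const (fun d ↦ hb d.2) ⊤

end Preorder

open Preorder

theorem exists_isGLB_of_forall_exists_isLUB {P : Type*} [Preorder P]
    (h : ∀ D : Set P, ∃ s, IsLUB D s) (D : Set P) : ∃ i, IsGLB D i :=
  (h (lowerBounds D)).imp fun _ ↦ isLUB_lowerBounds.mp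

/-- A preorder `P` is left Kan injective with respect to all full monotone
maps (full order-embeddings) of preorders — i.e. along every full monotone
`j : X → Y` every monotone `f : X → P` has a left Kan extension `g` with
`g ∘ j ≃ f` pointwise — if and only if `P` is a complete lattice up to
equivalence of preorders (every subset has a supremum and an infimum). -/
theorem stmt12 (P : Type) [Preorder P] :
    (∀ (X Y : Type) [Preorder X] [Preorder Y] (j : X → Y),
        Monotone j → (∀ x x' : X, j x ≤ j x' → x ≤ x') →
        ∀ f : X → P, Monotone f →
          ∃ g : Y → P, Monotone g ∧
            (∀ x, g (j x) ≤ f x ∧ f x ≤ g (j x)) ∧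
            (∀ h : Y → P, Monotone h → (∀ x, f x ≤ h (j x)) → ∀ y, g y ≤ h y)) ↔
      (∀ D : Set P, (∃ s, IsLUB D s) ∧ (∃ i, IsGLB D i)) := by
  constructor
  · intro hKan
    have hLUB (D : Set P) : ∃ s, IsLUB D s := by
      obtain ⟨g, hg⟩ := hKan D (WithTop D) (↑) WithTop.coe_mono
        (fun _ _ ↦ WithTop.coe_le_coe.mp) Subtype.val fun _ _ ↦ id
      exact ⟨g ⊤, IsLeftKanExtension.isLUB_top hg⟩
    exact fun D ↦ ⟨hLUB D, exists_isGLB_of_forall_exists_isLUB hLUB D⟩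
  · intro hComplete X Y _ _ j _ hj f hf
    choose sup hsup using fun D : Set P ↦ (hComplete D).1
    exact ⟨_, isLeftKanExtension_of_isLUB hf hj fun y ↦ hsup (f '' {x | j x ≤ y})⟩
end

section
/- A T0 topological space X that is injective with respect to all topological embeddings (every continuous map into X from a subspace extends continuously to the ambient space) is, under its specialisation order, a complete lattice in which every element is a directed supremum of elements way below it (i.e., a continuous lattice). [Scott's theorem, one direction: injective T0 spaces are continuous lattices under specialisation order.] -/
/-- The specialisation order of a topological space: `x ⊑ y` iff
`x ∈ closure {y}`. -/
def specLE (X : Type*) [TopologicalSpace X] (x y : X) : Prop :=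
  x ∈ closure {y}

/-- A set is directed with respect to a relation `r`. -/
def rDirected {X : Type*} (r : X → X → Prop) (D : Set X) : Prop :=
  D.Nonempty ∧ ∀ a ∈ D, ∀ b ∈ D, ∃ c ∈ D, r a c ∧ r b c

/-- `s` is a least upper bound of `D` with respect to a relation `r`. -/
def rIsLUB {X : Type*} (r : X → X → Prop) (D : Set X) (s : X) : Prop :=
  (∀ d ∈ D, r d s) ∧ ∀ b, (∀ d ∈ D, r d b) → r s b

/-- `x` is way below `y` with respect to a relation `r`. -/
def rWayBelow {X : Type*} (r : X → X → Prop) (x y : X) : Prop :=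
  ∀ D, rDirected r D → ∀ s, rIsLUB r D s → r y s → ∃ d ∈ D, r x d


/-!
Embed `X` into the power `Opens X → Prop` of Sierpiński space by `x ↦ (U ↦ x ∈ U)`; injectivity
yields a continuous retraction `ρ`. Continuous maps preserve specialisation, so `ρ` is monotone and
`ρ (U ↦ ∃ d ∈ D, d ∈ U)` is a supremum of any `D`. An open set of the power depends on finitely
many coordinates; pulling back along `ρ` shows that every open set of `X` is inaccessible by
directed suprema. Hence the elements `ρ (· ∈ F)`, for finite families `F` of open neighbourhoods
of `x`, are way below `x`, and they form a directed set with supremum `x`.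
-/

open Topology TopologicalSpace

section Specialization

variable {X : Type*} [TopologicalSpace X]

theorem specLE_iff_specializes {x y : X} : specLE X x y ↔ y ⤳ x :=
  specializes_iff_mem_closure.symm

theorem specLE.mem_open {x y : X} (h : specLE X x y) {U : Set X} (hU : IsOpen U) (hx : x ∈ U) :
    y ∈ U :=
  (specLE_iff_specializes.1 h).mem_open hU hx

instance : IsPreorder X (specLE X) where
  refl _ := specLE_iff_specializes.2 specializes_rfl
  trans _ _ _ hxy hyz :=
    specLE_iff_specializes.2 ((specLE_iff_specializes.1 hyz).trans (specLE_iff_specializes.1 hxy))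

theorem rDirected.exists_mem_forall_mem_finset {D : Set X} (hD : rDirected (specLE X) D)
    {F : Finset (Opens X)} (hF : ∀ U ∈ F, ∃ d ∈ D, d ∈ U) : ∃ d ∈ D, ∀ U ∈ F, d ∈ U := by
  have hFD : (F : Set (Opens X)) ⊆ ⋃ d ∈ D, {U | d ∈ U} := fun U hU => by
    obtain ⟨d, hd, hdU⟩ := hF U hU
    exact Set.mem_iUnion₂.2 ⟨d, hd, hdU⟩
  have hdir : DirectedOn (fun d e => {U : Opens X | d ∈ U} ⊆ {U | e ∈ U}) D :=
    DirectedOn.mono (r := specLE X) hD.2 fun _ _ hde U hU => hde.mem_open U.isOpen hU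
  exact DirectedOn.exists_mem_subset_of_finset_subset_biUnion hD.1 hdir hFD

end Specialization

theorem Prop.specializes_of_imp {p q : Prop} (h : p → q) : q ⤳ p := by
  by_cases hp : p
  · rw [eq_true hp, eq_true (h hp)]
  · rw [eq_false hp, specializes_iff_nhds, nhds_false]
    exact le_top

theorem IsOpen.exists_finset_forall_specializes_mem {ι : Type*} {π : ι → Type*}
    [∀ i, TopologicalSpace (π i)] {V : Set (∀ i, π i)} (hV : IsOpen V) {a : ∀ i, π i}
    (ha : a ∈ V) : ∃ F : Finset ι, ∀ b : ∀ i, π i, (∀ i ∈ F, b i ⤳ a i) → b ∈ V := by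
  obtain ⟨F, u, hu, hFu⟩ := isOpen_pi_iff.1 hV a ha
  exact ⟨F, fun b hb => hFu fun i hi => (hb i hi).mem_open (hu i hi).1 (hu i hi).2⟩

section WayBelow

variable {α : Type*} {r : α → α → Prop} [IsPreorder α r]

theorem rWayBelow.rel {x y : α} (h : rWayBelow r x y) : r x y := by
  have hdir : rDirected r {y} :=
    ⟨⟨y, rfl⟩, fun a ha b hb => ⟨y, rfl, ha ▸ refl_of r y, hb ▸ refl_of r y⟩⟩
  have hlub : rIsLUB r {y} y := ⟨by rintro _ rfl; exact refl_of r _, fun b hb => hb y rfl⟩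
  obtain ⟨_, rfl, hxy⟩ := h {y} hdir y hlub (refl_of r y)
  exact hxy

theorem rDirected_and_rIsLUB_wayBelow_of_approx {x : α} {D : Set α} (hD : rDirected r D)
    (hDx : rIsLUB r D x) (hwb : ∀ d ∈ D, rWayBelow r d x) :
    rDirected r {y | rWayBelow r y x} ∧ rIsLUB r {y | rWayBelow r y x} x := by
  refine ⟨⟨hD.1.imp hwb, fun a ha b hb => ?_⟩, fun y hy => hy.rel, fun b hb => ?_⟩
  · obtain ⟨da, hda, hada⟩ := ha D hD x hDx (refl_of r x)
    obtain ⟨db, hdb, hbdb⟩ := hb D hD x hDx (refl_of r x)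
    obtain ⟨c, hc, hdac, hdbc⟩ := hD.2 da hda db hdb
    exact ⟨c, hwb c hc, trans_of r hada hdac, trans_of r hbdb hdbc⟩
  · exact hDx.2 b fun d hd => hb d (hwb d hd)

end WayBelow

section SierpinskiRetract

variable {X : Type*} [TopologicalSpace X] {ρ : (Opens X → Prop) → X}

theorem specLE_retract (hρ : Continuous ρ) {A B : Opens X → Prop} (h : ∀ U, A U → B U) :
    specLE X (ρ A) (ρ B) :=
  specLE_iff_specializes.2 ((specializes_pi.2 fun U => Prop.specializes_of_imp (h U)).map hρ)

def finiteApprox (ρ : (Opens X → Prop) → X) (x : X) : Set X :=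
  (fun F => ρ (· ∈ F)) '' {F : Finset (Opens X) | ∀ U ∈ F, x ∈ U}

theorem rIsLUB_retract_exists_mem (hρ : Continuous ρ)
    (hρe : ∀ x, ρ (productOfMemOpens X x) = x) (D : Set X) :
    rIsLUB (specLE X) D (ρ fun U => ∃ d ∈ D, d ∈ U) := by
  refine ⟨fun d hd => ?_, fun b hb => ?_⟩
  · simpa only [hρe] using specLE_retract hρ (A := productOfMemOpens X d) fun U hU => ⟨d, hd, hU⟩
  · simpa only [hρe] using specLE_retract hρ (B := productOfMemOpens X b)
      fun U ⟨d, hd, hdU⟩ => (hb d hd).mem_open U.isOpen hdU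

theorem exists_mem_of_rIsLUB_mem_open (hρ : Continuous ρ)
    (hρe : ∀ x, ρ (productOfMemOpens X x) = x) {D : Set X} (hD : rDirected (specLE X) D) {s : X}
    (hs : rIsLUB (specLE X) D s) {V : Set X} (hV : IsOpen V) (hsV : s ∈ V) : ∃ d ∈ D, d ∈ V := by
  classical
  set A : Opens X → Prop := fun U => ∃ d ∈ D, d ∈ U
  have hA : A ∈ ρ ⁻¹' V := (hs.2 _ (rIsLUB_retract_exists_mem hρ hρe D).1).mem_open hV hsV
  obtain ⟨F, hF⟩ := (hV.preimage hρ).exists_finset_forall_specializes_mem hA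
  obtain ⟨d, hd, hdF⟩ := hD.exists_mem_forall_mem_finset (F := F.filter A)
    fun U hU => (Finset.mem_filter.1 hU).2
  refine ⟨d, hd, hρe d ▸ hF _ fun U hU => Prop.specializes_of_imp fun hAU => ?_⟩
  exact hdF U (Finset.mem_filter.2 ⟨hU, hAU⟩)

theorem rWayBelow_of_mem_finiteApprox (hρ : Continuous ρ)
    (hρe : ∀ x, ρ (productOfMemOpens X x) = x) {x y : X}
    (hy : y ∈ finiteApprox ρ x) : rWayBelow (specLE X) y x := by
  obtain ⟨F, hF, rfl⟩ := hy
  intro D hD s hs hxs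
  have hFo : IsOpen (⋂ U ∈ F, (U : Set X)) := isOpen_biInter_finset fun U _ => U.isOpen
  obtain ⟨d, hd, hdF⟩ := exists_mem_of_rIsLUB_mem_open hρ hρe hD hs hFo
    (hxs.mem_open hFo (Set.mem_iInter₂.2 hF))
  exact ⟨d, hd, hρe d ▸ specLE_retract hρ fun U hU => Set.mem_iInter₂.1 hdF U hU⟩

theorem rDirected_finiteApprox (hρ : Continuous ρ) (x : X) :
    rDirected (specLE X) (finiteApprox ρ x) := by
  classical
  refine ⟨⟨_, ∅, fun U hU => absurd hU (Finset.notMem_empty U), rfl⟩, ?_⟩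
  rintro _ ⟨F, hF, rfl⟩ _ ⟨G, hG, rfl⟩
  refine ⟨_, ⟨F ∪ G, fun U hU => (Finset.mem_union.1 hU).elim (hF U) (hG U), rfl⟩, ?_, ?_⟩
  · exact specLE_retract hρ fun U => Finset.mem_union_left G
  · exact specLE_retract hρ fun U => Finset.mem_union_right F

theorem rIsLUB_finiteApprox (hρ : Continuous ρ)
    (hρe : ∀ x, ρ (productOfMemOpens X x) = x) (x : X) :
    rIsLUB (specLE X) (finiteApprox ρ x) x := by
  classical
  refine ⟨?_, fun b hb => ?_⟩
  · rintro _ ⟨F, hF, rfl⟩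
    exact hρe x ▸ specLE_retract hρ (B := productOfMemOpens X x) hF
  refine specLE_iff_specializes.2 (specializes_iff_forall_open.2 fun U hU hxU => ?_)
  have hx : productOfMemOpens X x ∈ ρ ⁻¹' U := by rwa [Set.mem_preimage, hρe]
  obtain ⟨G, hG⟩ := (hU.preimage hρ).exists_finset_forall_specializes_mem hx
  have hGx : ρ (· ∈ G.filter (x ∈ ·)) ∈ U :=
    hG _ fun V hV => Prop.specializes_of_imp fun hxV => Finset.mem_filter.2 ⟨hV, hxV⟩
  exact (hb _ ⟨_, fun V hV => (Finset.mem_filter.1 hV).2, rfl⟩).mem_open hU hGx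

end SierpinskiRetract

/-- Scott's theorem, one direction: a T₀ space that is injective with respect
to all topological embeddings is, under its specialisation order, a complete
lattice in which every element is a directed supremum of the elements way
below it (i.e. a continuous lattice). -/
theorem stmt13 (X : Type) [TopologicalSpace X] [T0Space X]
    (hinj : ∀ (A B : Type) (_ : TopologicalSpace A) (_ : TopologicalSpace B)
        (j : A → B), Topology.IsEmbedding j →
        ∀ f : A → X, Continuous f → ∃ g : B → X, Continuous g ∧ ∀ a, g (j a) = f a) :
    (∀ D : Set X, ∃ s, rIsLUB (specLE X) D s) ∧
      (∀ x : X, rDirected (specLE X) {y | rWayBelow (specLE X) y x} ∧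
        rIsLUB (specLE X) {y | rWayBelow (specLE X) y x} x) := by
  obtain ⟨ρ, hρ, hρe⟩ := hinj X (Opens X → Prop) _ _ (productOfMemOpens X)
    (productOfMemOpens_isEmbedding X) id continuous_id
  refine ⟨fun D => ⟨_, rIsLUB_retract_exists_mem hρ hρe D⟩, fun x => ?_⟩
  exact rDirected_and_rIsLUB_wayBelow_of_approx (rDirected_finiteApprox hρ x)
    (rIsLUB_finiteApprox hρ hρe x)
    fun _ => rWayBelow_of_mem_finiteApprox hρ hρe
end

section
/- Let β be a limit ordinal with the topology on {γ : γ < β} in which U is open iff U is upward closed and for every bounded subset D ⊆ β with sup D ∈ U one has U ∩ D ≠ ∅. Then for each μ < β the inclusion succ(μ) ↪ β is a topological embedding when succ(μ) carries its Scott topology. -/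
/-- Scott-openness for a subset of a complete linear order: `U` is upward
closed and meets every nonempty directed set whose supremum lies in `U`. -/
def ScottOpen {L : Type*} [Preorder L] (U : Set L) : Prop :=
  IsUpperSet U ∧
    ∀ D : Set L, D.Nonempty → DirectedOn (· ≤ ·) D →
      ∀ s, IsLUB D s → s ∈ U → (D ∩ U).Nonempty

/-- Openness for the colimit topology on a limit ordinal `β`: `V` is upward
closed and meets every nonempty bounded set whose supremum lies in `V`. -/
def LimitOpen {L : Type*} [Preorder L] (V : Set L) : Prop :=
  IsUpperSet V ∧
    ∀ D : Set L, D.Nonempty → BddAbove D →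
      ∀ s, IsLUB D s → s ∈ V → (D ∩ V).Nonempty

/-!
The inclusion `Iic μ ↪ Iio β` is an initial segment, and any initial segment `f : α ≤i β` of
linear orders preserves suprema: an upper bound `b < f s` of
`f '' D` would lie in the range of `f`, hence be the image of an upper bound of `D` below `s`.
So preimages of `LimitOpen` sets are Scott open. Conversely, a Scott-open `U` is the trace of
its upper closure `V` in `β`: if `sup D ∈ V` lies strictly above some `f u` with `u ∈ U`, some
element of `D` does too; otherwise `sup D = f u`, so `D` lies in the range of `f` and Scott
openness of `U` applies to its preimage, which is directed because `α` is linear.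
-/

section

variable {α β : Type*}

def Set.initialSegIicIioOfLT [Preorder α] {μ ν : α} (h : μ < ν) : Set.Iic μ ≤i Set.Iio ν where
  toFun γ := ⟨γ, γ.2.trans_lt h⟩
  inj' _ _ hab := Subtype.ext (congrArg (fun γ : Set.Iio ν => γ.1) hab)
  map_rel_iff' := Iff.rfl
  mem_range_of_rel' γ δ hδ := ⟨⟨δ, (Subtype.coe_lt_coe.2 hδ).le.trans γ.2⟩, rfl⟩

namespace InitialSeg

theorem isLUB_image [PartialOrder α] [LinearOrder β] (f : α ≤i β) {D : Set α} {s : α}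
    (hs : IsLUB D s) : IsLUB (f '' D) (f s) := by
  refine ⟨Set.forall_mem_image.2 fun d hd => f.monotone (hs.1 hd), fun b hb => ?_⟩
  by_contra! hbs
  obtain ⟨c, hcs, rfl⟩ := f.lt_apply_iff.1 hbs
  have hc : c ∈ upperBounds D := fun d hd => (f.le_iff_le).1 (hb ⟨d, hd, rfl⟩)
  exact lt_irrefl c (hcs.trans_le (hs.2 hc))

theorem isLUB_preimage [PartialOrder α] [PartialOrder β] (f : α ≤i β) {D : Set β} {a : α}
    (hD : IsLUB D (f a)) : IsLUB (f ⁻¹' D) a := by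
  refine ⟨fun e he => (f.le_iff_le).1 (hD.1 he),
    fun b hb => (f.le_iff_le).1 (hD.2 fun d hd => ?_)⟩
  obtain ⟨e, rfl⟩ := f.mem_range_of_le (hD.1 hd)
  exact f.monotone (hb hd)

theorem scottOpen_preimage [PartialOrder α] [LinearOrder β] (f : α ≤i β) {V : Set β}
    (hV : LimitOpen V) : ScottOpen (f ⁻¹' V) := by
  refine ⟨hV.1.preimage f.monotone, fun D hD _ s hs hsV => ?_⟩
  obtain ⟨_, ⟨d, hd, rfl⟩, hdV⟩ :=
    hV.2 (f '' D) (hD.image f) (f.isLUB_image hs).bddAbove (f s) (f.isLUB_image hs) hsV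
  exact ⟨d, hd, hdV⟩

theorem limitOpen_upperClosure_image [LinearOrder α] [LinearOrder β] (f : α ≤i β) {U : Set α}
    (hU : ScottOpen U) : LimitOpen (upperClosure (f '' U) : Set β) := by
  refine ⟨(upperClosure _).upper, fun D hD _ s hs hsV => ?_⟩
  obtain ⟨_, ⟨u, hu, rfl⟩, hus⟩ := mem_upperClosure.1 hsV
  rcases hus.lt_or_eq with hlt | rfl
  · obtain ⟨d, hd, hud⟩ := (lt_isLUB_iff hs).1 hlt
    exact ⟨d, hd, mem_upperClosure.2 ⟨f u, ⟨u, hu, rfl⟩, hud.le⟩⟩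
  · have hrange : D ⊆ Set.range f := fun d hd => f.mem_range_of_le (hs.1 hd)
    have hE : (f ⁻¹' D).Nonempty := by
      obtain ⟨_, hd⟩ := hD
      obtain ⟨e, rfl⟩ := hrange hd
      exact ⟨e, hd⟩
    obtain ⟨e, he, heU⟩ := hU.2 _ hE (isChain_of_trichotomous _).directedOn u
      (f.isLUB_preimage hs) hu
    exact ⟨f e, he, mem_upperClosure.2 ⟨f e, ⟨e, heU, rfl⟩, le_rfl⟩⟩

theorem preimage_upperClosure_image [PartialOrder α] [PartialOrder β] (f : α ≤i β) {U : Set α}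
    (hU : IsUpperSet U) : f ⁻¹' (upperClosure (f '' U) : Set β) = U := by
  ext x
  simp only [Set.mem_preimage, SetLike.mem_coe, mem_upperClosure, Set.exists_mem_image,
    f.le_iff_le]
  exact ⟨fun ⟨u, hu, hux⟩ => hU hux hu, fun hx => ⟨x, hx, le_rfl⟩⟩

theorem scottOpen_iff_exists_limitOpen [LinearOrder α] [LinearOrder β] (f : α ≤i β)
    (U : Set α) : ScottOpen U ↔ ∃ V : Set β, LimitOpen V ∧ U = f ⁻¹' V :=
  ⟨fun hU => ⟨_, f.limitOpen_upperClosure_image hU, (f.preimage_upperClosure_image hU.1).symm⟩,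
    fun ⟨_, hV, hUV⟩ => hUV ▸ f.scottOpen_preimage hV⟩

end InitialSeg

end

theorem stmt18_general (β : Ordinal) (μ : Ordinal) (hμ : μ < β) :
    Function.Injective
      (fun γ : {γ : Ordinal // γ ≤ μ} =>
        (⟨γ.1, lt_of_le_of_lt γ.2 hμ⟩ : {γ : Ordinal // γ < β})) ∧
    ∀ U : Set {γ : Ordinal // γ ≤ μ},
      ScottOpen U ↔
        ∃ V : Set {γ : Ordinal // γ < β}, LimitOpen V ∧
          U = (fun γ : {γ : Ordinal // γ ≤ μ} =>
                (⟨γ.1, lt_of_le_of_lt γ.2 hμ⟩ : {γ : Ordinal // γ < β})) ⁻¹' V :=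
  ⟨(Set.initialSegIicIioOfLT hμ).injective,
    (Set.initialSegIicIioOfLT hμ).scottOpen_iff_exists_limitOpen⟩

/-- For a limit ordinal `β` with the colimit topology, each inclusion
`succ μ ↪ β` (for `μ < β`) is a topological embedding when `succ μ` carries
its Scott topology: it is injective, and the Scott-open subsets of `succ μ`
are exactly the preimages of open subsets of `β`. -/
theorem stmt18 (β : Ordinal) (hβ : Order.IsSuccLimit β) (μ : Ordinal) (hμ : μ < β) :
    Function.Injective
      (fun γ : {γ : Ordinal // γ ≤ μ} =>
        (⟨γ.1, lt_of_le_of_lt γ.2 hμ⟩ : {γ : Ordinal // γ < β})) ∧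
    ∀ U : Set {γ : Ordinal // γ ≤ μ},
      ScottOpen U ↔
        ∃ V : Set {γ : Ordinal // γ < β}, LimitOpen V ∧
          U = (fun γ : {γ : Ordinal // γ ≤ μ} =>
                (⟨γ.1, lt_of_le_of_lt γ.2 hμ⟩ : {γ : Ordinal // γ < β})) ⁻¹' V :=
  stmt18_general β μ hμ
end
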